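/- arXiv:2509.01384 — 6 statements merged into one kernel-verified Lean document; each statement's English description precedes it below -/
import Mathlib

section
/- A finite set S of nonempty finite sets (simplexes) is a cosimplicial complex (i.e., for any σ, τ ∈ S, every ν with σ ⊆ ν ⊆ τ belongs to S) if and only if S is the difference of two simplicial complexes. -/
open Finset

abbrev Simplex : Type := Finset ℕ
abbrev Cplx : Type := Finset (Finset ℕ)

/-- A simplicial complex: a finite set of nonempty finite sets closed under
taking nonempty subsets. -/
def IsSimpComplex (K : Cplx) : Prop :=
  (∀ τ ∈ K, τ.Nonempty) ∧ ∀ τ ∈ K, ∀ σ : Simplex, σ ⊆ τ → σ.Nonempty → σ ∈ K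

/-- A cosimplicial complex: for all σ, τ ∈ S, every ν with σ ⊆ ν ⊆ τ is in S. -/
def IsCosimplicial (S : Cplx) : Prop :=
  ∀ σ ∈ S, ∀ τ ∈ S, ∀ ν : Simplex, σ ⊆ ν → ν ⊆ τ → ν ∈ S

/-- S is open for K. -/
def IsOpenFor (K S : Cplx) : Prop :=
  S ⊆ K ∧ ∀ σ ∈ S, ∀ τ ∈ K, σ ⊆ τ → τ ∈ S

/-- S is closed for K. -/
def IsClosedFor (K S : Cplx) : Prop :=
  S ⊆ K ∧ IsSimpComplex S

/-- Closure of a finite set of simplexes: all nonempty subsets of members. -/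
def cl (S : Cplx) : Cplx :=
  S.biUnion fun τ => τ.powerset.filter fun σ => σ.Nonempty

/-- (σ, τ) is a free pair for K: τ is the only face of K properly containing σ. -/
def IsFreePair (K : Cplx) (σ τ : Simplex) : Prop :=
  σ ∈ K ∧ τ ∈ K ∧ σ ⊂ τ ∧ ∀ ρ ∈ K, σ ⊂ ρ → ρ = τ

/-- K' is an elementary expansion of K. -/
def ElemExpansion (K' K : Cplx) : Prop :=
  ∃ σ τ : Simplex, σ ∉ K ∧ τ ∉ K ∧ K' = K ∪ {σ, τ} ∧ IsFreePair K' σ τ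

/-- K' is an elementary filling of K: K' = K ∪ {ν} with ν a facet of K'. -/
def ElemFilling (K' K : Cplx) : Prop :=
  ∃ ν : Simplex, ν ∉ K ∧ K' = insert ν K ∧ ∀ ρ ∈ K', ν ⊆ ρ → ρ = ν

/-- A collapses onto B: a sequence of elementary collapses from A to B. -/
def Collapses (A B : Cplx) : Prop :=
  Relation.ReflTransGen (fun X Y : Cplx => ElemExpansion X Y) A B

/-- A Morse sequence from L to K, as W 0, …, W k, consisting of simplicial
complexes, each step an elementary expansion or an elementary filling. -/
def MorseSeq (L K : Cplx) (k : ℕ) (W : ℕ → Cplx) : Prop :=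
  W 0 = L ∧ W k = K ∧ (∀ i ≤ k, IsSimpComplex (W i)) ∧
  ∀ i < k, ElemExpansion (W (i+1)) (W i) ∨ ElemFilling (W (i+1)) (W i)

/-- F is a stack on S: monotone with respect to inclusion. -/
def IsStackOn (S : Cplx) (F : Simplex → ℤ) : Prop :=
  ∀ σ ∈ S, ∀ τ ∈ S, σ ⊆ τ → F σ ≤ F τ

/-- (σ, τ) is a regular pair of the Morse sequence W (of length k). -/
def RegularPair (k : ℕ) (W : ℕ → Cplx) (σ τ : Simplex) : Prop :=
  ∃ i < k, σ ∉ W i ∧ τ ∉ W i ∧ W (i+1) = W i ∪ {σ, τ} ∧ IsFreePair (W (i+1)) σ τ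

/-- An F-sequence: a Morse sequence whose regular pairs satisfy F σ = F τ. -/
def FSeq (F : Simplex → ℤ) (L K : Cplx) (k : ℕ) (W : ℕ → Cplx) : Prop :=
  MorseSeq L K k W ∧ ∀ σ τ : Simplex, RegularPair k W σ τ → F σ = F τ

/-- A flooding sequence: an F-sequence from ∅ to K such that F σ ≤ F τ whenever
σ ∈ K_i and τ ∈ K_j appears strictly later (τ ∉ K_i), with i < j. -/
def Flooding (F : Simplex → ℤ) (K : Cplx) (k : ℕ) (W : ℕ → Cplx) : Prop :=
  FSeq F ∅ K k W ∧
  ∀ i j : ℕ, i < j → j ≤ k → ∀ σ ∈ W i, ∀ τ ∈ W j, τ ∉ W i → F σ ≤ F τ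

/-- Coboundary δ(ν, S) of ν in S. -/
def cob (S : Cplx) (ν : Simplex) : Cplx :=
  S.filter fun μ => ν ⊆ μ ∧ μ.card = ν.card + 1

/-- Boundary ∂(ν, S) of ν in S. -/
def bdry (S : Cplx) (ν : Simplex) : Cplx :=
  S.filter fun η => η ⊆ ν ∧ η.card + 1 = ν.card

/-! A cosimplicial `S` of nonempty simplexes is `cl S \ (cl S \ S)`: a face of a simplex of
`cl S \ S` that lay in `S` would squeeze that simplex between two members of `S`. Conversely a
simplex between two members `σ ⊆ τ` of `K \ L` lies in `K` as a face of `τ`, and outside `L`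
since `σ` is one of its faces. -/

theorem mem_cl {S : Cplx} {ν : Simplex} : ν ∈ cl S ↔ ∃ ρ ∈ S, ν ⊆ ρ ∧ ν.Nonempty := by
  simp only [cl, mem_biUnion, mem_filter, mem_powerset]

theorem subset_cl {S : Cplx} (hS : ∀ ν ∈ S, ν.Nonempty) : S ⊆ cl S :=
  fun ν hν => mem_cl.2 ⟨ν, hν, subset_rfl, hS ν hν⟩

theorem isSimpComplex_cl (S : Cplx) : IsSimpComplex (cl S) := by
  refine ⟨fun τ hτ => (mem_cl.1 hτ).elim fun _ h => h.2.2, fun τ hτ σ hστ hσ => ?_⟩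
  obtain ⟨ρ, hρ, hτρ, -⟩ := mem_cl.1 hτ
  exact mem_cl.2 ⟨ρ, hρ, hστ.trans hτρ, hσ⟩

theorem IsCosimplicial.isSimpComplex_cl_sdiff {S : Cplx} (hS : IsCosimplicial S) :
    IsSimpComplex (cl S \ S) := by
  refine ⟨fun τ hτ => (isSimpComplex_cl S).1 τ (mem_sdiff.1 hτ).1, fun τ hτ σ hστ hσ => ?_⟩
  obtain ⟨hτcl, hτS⟩ := mem_sdiff.1 hτ
  refine mem_sdiff.2 ⟨(isSimpComplex_cl S).2 τ hτcl σ hστ hσ, fun hσS => hτS ?_⟩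
  obtain ⟨ρ, hρ, hτρ, -⟩ := mem_cl.1 hτcl
  exact hS σ hσS ρ hρ τ hστ hτρ

theorem IsSimpComplex.isCosimplicial_sdiff {K L : Cplx} (hK : IsSimpComplex K)
    (hL : IsSimpComplex L) : IsCosimplicial (K \ L) := by
  intro σ hσ τ hτ ν hσν hντ
  rw [mem_sdiff] at hσ hτ ⊢
  have hσne : σ.Nonempty := hK.1 σ hσ.1
  exact ⟨hK.2 τ hτ.1 ν hντ (hσne.mono hσν), fun hνL => hσ.2 (hL.2 ν hνL σ hσν hσne)⟩

theorem cosimplicial_iff_diff_of_simplicial (S : Cplx) (hS : ∀ ν ∈ S, ν.Nonempty) :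
    IsCosimplicial S ↔ ∃ K L : Cplx, IsSimpComplex K ∧ IsSimpComplex L ∧ S = K \ L := by
  constructor
  · intro hco
    exact ⟨cl S, cl S \ S, isSimpComplex_cl S, hco.isSimpComplex_cl_sdiff,
      (Finset.sdiff_sdiff_eq_self (subset_cl hS)).symm⟩
  · rintro ⟨K, L, hK, hL, rfl⟩
    exact hK.isCosimplicial_sdiff hL
end

section
/- Let F be a stack on K and W = ⟨L = K_0, …, K_k = K⟩ an F-sequence. If K_i and K_j (j > i) are two consecutive critical complexes for W (i.e., K_{i+1}, …, K_{j-1} are produced by expansions), then for each λ ∈ ℤ, the complex F_λ ∩ K_{j-1} collapses onto F_λ ∩ K_i. -/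
open Finset

/-!
An expansion step of an F-sequence adds a regular pair (σ, τ) with F σ = F τ, so the sublevel
set F_λ contains either both faces or neither. Intersecting the step with F_λ therefore gives
either the same complex or an elementary expansion, because a free pair stays free in every
subcomplex containing it. Between two consecutive critical complexes every step is an
expansion, and these collapses compose.
-/

theorem IsFreePair.of_subset {K K' : Cplx} {σ τ : Simplex} (hfree : IsFreePair K σ τ)
    (hK' : K' ⊆ K) (hσ : σ ∈ K') (hτ : τ ∈ K') : IsFreePair K' σ τ :=
  ⟨hσ, hτ, hfree.2.2.1, fun ρ hρ hσρ => hfree.2.2.2 ρ (hK' hρ) hσρ⟩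

theorem collapses_inter_union_pair {S K : Cplx} {σ τ : Simplex} (hσ : σ ∉ K) (hτ : τ ∉ K)
    (hfree : IsFreePair (K ∪ {σ, τ}) σ τ) (hS : σ ∈ S ↔ τ ∈ S) :
    Collapses (S ∩ (K ∪ {σ, τ})) (S ∩ K) := by
  rw [inter_union_distrib_left]
  by_cases hσS : σ ∈ S
  · have hpair : S ∩ {σ, τ} = {σ, τ} :=
      inter_eq_right.mpr (insert_subset hσS (singleton_subset_iff.mpr (hS.mp hσS)))
    rw [hpair]
    refine .single ⟨σ, τ, fun h => hσ (mem_inter.mp h).2, fun h => hτ (mem_inter.mp h).2, rfl,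
      hfree.of_subset (union_subset_union inter_subset_right subset_rfl) ?_ ?_⟩ <;> simp
  · have hpair : S ∩ {σ, τ} = ∅ := by
      rw [inter_insert_of_notMem hσS, inter_singleton_of_notMem (hσS ∘ hS.mpr)]
    rw [hpair, union_empty]
    exact .refl

theorem collapses_of_forall_collapses_succ {A : ℕ → Cplx} {i n : ℕ} (hin : i ≤ n)
    (h : ∀ m, i ≤ m → m < n → Collapses (A (m + 1)) (A m)) : Collapses (A n) (A i) :=
  (reflTransGen_of_succ_of_ge (fun a b => Collapses (A a) (A b))
      (fun m hm => h m hm.1 hm.2) hin).lift' A fun _ _ => id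

namespace MorseSeq

variable {L K : Cplx} {k : ℕ} {W : ℕ → Cplx}

theorem subset_succ (hW : MorseSeq L K k W) {m : ℕ} (hm : m < k) : W m ⊆ W (m + 1) := by
  rcases hW.2.2.2 m hm with ⟨σ, τ, -, -, heq, -⟩ | ⟨ν, -, heq, -⟩
  · exact heq ▸ subset_union_left
  · exact heq ▸ subset_insert ν (W m)

theorem subset_of_le (hW : MorseSeq L K k W) {a b : ℕ} (hab : a ≤ b) (hbk : b ≤ k) :
    W a ⊆ W b := by
  induction b, hab using Nat.le_induction with
  | base => exact subset_rfl
  | succ b _ ih => exact (ih (by omega)).trans (hW.subset_succ (by omega))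

theorem subset_last (hW : MorseSeq L K k W) {m : ℕ} (hm : m ≤ k) : W m ⊆ K :=
  hW.2.1 ▸ hW.subset_of_le hm le_rfl

end MorseSeq

theorem FSeq.collapses_sublevel_inter_succ {F : Simplex → ℤ} {L K : Cplx} {k : ℕ}
    {W : ℕ → Cplx} (hW : FSeq F L K k W) {m : ℕ} (hm : m < k)
    (hexp : ElemExpansion (W (m + 1)) (W m)) (lam : ℤ) :
    Collapses ((K.filter fun ν => F ν ≤ lam) ∩ W (m + 1))
      ((K.filter fun ν => F ν ≤ lam) ∩ W m) := by
  obtain ⟨σ, τ, hσ, hτ, heq, hfree⟩ := hexp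
  have hFστ : F σ = F τ := hW.2 σ τ ⟨m, hm, hσ, hτ, heq, hfree⟩
  have hWK := hW.1.subset_last (Nat.succ_le_of_lt hm)
  rw [heq] at hfree hWK ⊢
  refine collapses_inter_union_pair hσ hτ hfree ?_
  simp only [mem_filter, hWK hfree.1, hWK hfree.2.1, hFστ, true_and]

theorem collapse_theorem_for_stacks_general (K L : Cplx) (F : Simplex → ℤ)
    (k : ℕ) (W : ℕ → Cplx)
    (hW : FSeq F L K k W)
    (i j : ℕ) (hij : i < j) (hjk : j ≤ k)
    (hreg : ∀ m, i ≤ m → m < j - 1 → ElemExpansion (W (m+1)) (W m))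
    (lam : ℤ) :
    Collapses ((K.filter fun ν => F ν ≤ lam) ∩ W (j-1))
      ((K.filter fun ν => F ν ≤ lam) ∩ W i) :=
  collapses_of_forall_collapses_succ (A := fun m => (K.filter fun ν => F ν ≤ lam) ∩ W m)
    (Nat.le_sub_one_of_lt hij) fun m him hmj =>
    hW.collapses_sublevel_inter_succ (by omega) (hreg m him hmj) lam

theorem collapse_theorem_for_stacks (K L : Cplx) (F : Simplex → ℤ)
    (k : ℕ) (W : ℕ → Cplx)
    (hK : IsSimpComplex K) (hF : IsStackOn K F)
    (hW : FSeq F L K k W)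
    (i j : ℕ) (hij : i < j) (hjk : j ≤ k) (hi : 1 ≤ i)
    (hcriti : ElemFilling (W i) (W (i-1)))
    (hcritj : ElemFilling (W j) (W (j-1)))
    (hreg : ∀ m, i ≤ m → m < j - 1 → ElemExpansion (W (m+1)) (W m))
    (lam : ℤ) :
    Collapses ((K.filter fun ν => F ν ≤ lam) ∩ W (j-1))
      ((K.filter fun ν => F ν ≤ lam) ∩ W i) :=
  collapse_theorem_for_stacks_general K L F k W hW i j hij hjk hreg lam
end

section
/- Let F be a stack on K and W = ⟨∅ = K_0, …, K_k = K⟩ an F-sequence. Then W is a flooding sequence if and only if, for each λ ∈ ℤ, there exists i ∈ [0, k] such that F_λ = K_i, where F_λ = {ν ∈ K : F(ν) ≤ λ}. -/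
open Finset

lemma morse_step {L K : Cplx} {k : ℕ} {W : ℕ → Cplx} (hW : MorseSeq L K k W)
    {i : ℕ} (hi : i < k) : W i ⊆ W (i+1) := by
  rcases hW.2.2.2 i hi with ⟨σ, τ, _, _, hEq, _⟩ | ⟨ν, _, hEq, _⟩
  · rw [hEq]; exact Finset.subset_union_left
  · rw [hEq]; exact Finset.subset_insert _ _

lemma morse_mono {L K : Cplx} {k : ℕ} {W : ℕ → Cplx} (hW : MorseSeq L K k W)
    {a b : ℕ} (hab : a ≤ b) (hb : b ≤ k) : W a ⊆ W b := by
  induction b with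
  | zero => simp_all
  | succ n ih =>
    rcases Nat.lt_or_ge a (n+1) with h | h
    · exact (ih (Nat.lt_succ_iff.mp h) (le_trans (Nat.le_succ n) hb)).trans
        (morse_step hW (Nat.lt_of_succ_le hb))
    · have : a = n+1 := le_antisymm hab h
      subst this; exact subset_rfl

theorem flooding_iff_cuts_appear (K : Cplx) (F : Simplex → ℤ)
    (k : ℕ) (W : ℕ → Cplx)
    (hK : IsSimpComplex K) (hF : IsStackOn K F) (hW : FSeq F ∅ K k W) :
    Flooding F K k W ↔
      ∀ lam : ℤ, ∃ i ≤ k, (K.filter fun ν => F ν ≤ lam) = W i := by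
  classical
  obtain ⟨hM, hReg⟩ := hW
  have hW0 : W 0 = ∅ := hM.1
  have hWk : W k = K := hM.2.1
  constructor
  · rintro ⟨-, hflood⟩ lam
    set P : ℕ → Prop := fun j => ∀ σ ∈ W j, F σ ≤ lam with hP
    have hP0 : P 0 := by intro σ hσ; rw [hW0] at hσ; exact absurd hσ (Finset.notMem_empty σ)
    set i := Nat.findGreatest P k with hi
    have hik : i ≤ k := Nat.findGreatest_le k
    have hPi : P i := Nat.findGreatest_spec (Nat.zero_le k) hP0
    refine ⟨i, hik, ?_⟩
    apply Finset.Subset.antisymm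
    · intro ν hν
      rw [Finset.mem_filter] at hν
      obtain ⟨hνK, hνlam⟩ := hν
      by_contra hni
      have hνk : ν ∈ W k := by rw [hWk]; exact hνK
      -- least index where ν appears
      have hex : ∃ j, ν ∈ W j := ⟨k, hνk⟩
      set j := Nat.find hex with hj
      have hνj : ν ∈ W j := Nat.find_spec hex
      have hjk : j ≤ k := Nat.find_le hνk
      have hij : i < j := by
        by_contra h
        exact hni (morse_mono hM (Nat.le_of_not_lt h) hik hνj)
      -- maximality of i: P (i+1) fails
      have hik' : i + 1 ≤ k := Nat.succ_le_of_lt (lt_of_lt_of_le hij hjk)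
      have hnP : ¬ P (i+1) := Nat.findGreatest_is_greatest (Nat.lt_succ_self i) hik'
      simp only [hP] at hnP
      push_neg at hnP
      obtain ⟨τ, hτ, hτlam⟩ := hnP
      have hτni : τ ∉ W i := fun h => absurd (hPi τ h) (not_le.mpr hτlam)
      clear_value j
      obtain ⟨m, rfl⟩ : ∃ m, j = m + 1 := by
        cases j with
        | zero => rw [hW0] at hνj; exact absurd hνj (Finset.notMem_empty ν)
        | succ m => exact ⟨m, rfl⟩
      have hνnm : ν ∉ W m := Nat.find_min hex (by omega)
      have him : i ≤ m := Nat.lt_succ_iff.mp hij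
      rcases eq_or_lt_of_le him with rfl | him'
      · -- same step: both ν and τ added at step i → i+1
        have hmk : i < k := lt_of_lt_of_le hij hjk
        rcases hM.2.2.2 i hmk with ⟨σ', τ', hσ'n, hτ'n, hEq, hFree⟩ | ⟨ν', hν'n, hEq, _⟩
        · have hFeq : F σ' = F τ' := hReg σ' τ' ⟨i, hmk, hσ'n, hτ'n, hEq, hFree⟩
          have hmem : ∀ x, x ∈ W (i+1) → x ∉ W i → F x = F σ' := by
            intro x hx hxn
            rw [hEq, Finset.mem_union] at hx
            rcases hx with hx | hx
            · exact absurd hx hxn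
            · simp only [Finset.mem_insert, Finset.mem_singleton] at hx
              rcases hx with rfl | rfl
              · rfl
              · exact hFeq.symm
          have h1 := hmem ν hνj hνnm
          have h2 := hmem τ hτ hτni
          rw [h1] at hνlam; rw [h2] at hτlam
          exact absurd hνlam (not_le.mpr hτlam)
        · have : ∀ x, x ∈ W (i+1) → x ∉ W i → x = ν' := by
            intro x hx hxn
            rw [hEq, Finset.mem_insert] at hx
            tauto
          have h1 := this ν hνj hνnm
          have h2 := this τ hτ hτni
          rw [h1] at hνlam; rw [h2] at hτlam
          exact absurd hνlam (not_le.mpr hτlam)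
      · -- τ ∈ W (i+1) ⊆ W m, apply flooding at (m, m+1)
        have hτm : τ ∈ W m := morse_mono hM (Nat.succ_le_of_lt him')
          (le_trans (Nat.le_succ m) hjk) hτ
        have := hflood m (m+1) (Nat.lt_succ_self m) hjk τ hτm ν hνj hνnm
        exact absurd hνlam (not_le.mpr (lt_of_lt_of_le hτlam this))
    · intro σ hσ
      rw [Finset.mem_filter]
      refine ⟨?_, hPi σ hσ⟩
      rw [← hWk]; exact morse_mono hM hik le_rfl hσ
  · intro h
    refine ⟨⟨hM, hReg⟩, ?_⟩
    intro i j hij hjk σ hσ τ hτ hτni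
    by_contra hlt
    have hlt : F τ < F σ := lt_of_not_ge hlt
    obtain ⟨m, hmk, hmeq⟩ := h (F τ)
    have hσK : σ ∈ K := by rw [← hWk]; exact morse_mono hM (le_trans (le_of_lt hij) hjk) le_rfl hσ
    have hτK : τ ∈ K := by rw [← hWk]; exact morse_mono hM hjk le_rfl hτ
    have hτm : τ ∈ W m := by
      rw [← hmeq, Finset.mem_filter]; exact ⟨hτK, le_rfl⟩
    have hσm : σ ∉ W m := by
      rw [← hmeq, Finset.mem_filter]
      rintro ⟨-, h'⟩
      exact absurd h' (not_le.mpr hlt)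
    have hmi : m < i := by
      by_contra h'
      exact hσm (morse_mono hM (Nat.le_of_not_lt h') hmk hσ)
    exact hτni (morse_mono hM (le_of_lt hmi) (le_trans (le_of_lt hij) hjk) hτm)
end

section
/- (Exchange lemma) Let F be a stack on K and ⟨κ_1, …, κ_i, κ_{i+1}, …, κ_k⟩ be a simplex-wise F-sequence with k ≥ 2. If F(κ_i) > F(κ_{i+1}) for some 1 ≤ i ≤ k−1, then the sequence obtained by swapping κ_i and κ_{i+1} is again a simplex-wise F-sequence. -/
open Finset

/-- An item of a simplex-wise Morse sequence: either a critical simplex or a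
regular pair. -/
inductive MorseItem where
  | crit (ν : Simplex)
  | pair (σ τ : Simplex)

/-- The set of faces added by an item. -/
def MorseItem.faces : MorseItem → Cplx
  | .crit ν => {ν}
  | .pair σ τ => {σ, τ}

/-- The F-value of an item (F((σ,τ)) := F σ). -/
def MorseItem.val (F : Simplex → ℤ) : MorseItem → ℤ
  | .crit ν => F ν
  | .pair σ _ => F σ

/-- The item is a valid step (filling / F-expansion) from the complex K. -/
def StepOK (F : Simplex → ℤ) (K : Cplx) : MorseItem → Prop
  | .crit ν => ν ∉ K ∧ IsSimpComplex (insert ν K) ∧ ∀ ρ ∈ insert ν K, ν ⊆ ρ → ρ = ν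
  | .pair σ τ => σ ∉ K ∧ τ ∉ K ∧ IsSimpComplex (K ∪ {σ, τ}) ∧
      IsFreePair (K ∪ {σ, τ}) σ τ ∧ F σ = F τ

/-- The list of items is a simplex-wise F-sequence starting from K. -/
def SWSeq (F : Simplex → ℤ) : Cplx → List MorseItem → Prop
  | _, [] => True
  | K, it :: rest => StepOK F K it ∧ SWSeq F (K ∪ it.faces) rest

/-!
Since `F` is monotone on `K` and `F b < F a`, no face added by `a` lies below a face added
by `b`. Hence adding `b` first leaves a simplicial complex (every face of a face of `b` was
already there before `a`), every face of `b` is still free or maximal without `a`, and the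
faces of `b` never obstruct the freeness or maximality of the faces of `a`.
-/

def addItems (C : Cplx) (l : List MorseItem) : Cplx :=
  l.foldl (fun C it => C ∪ it.faces) C

lemma subset_addItems (C : Cplx) (l : List MorseItem) : C ⊆ addItems C l := by
  induction l generalizing C with
  | nil => exact subset_rfl
  | cons it l ih => exact subset_union_left.trans (ih (C ∪ it.faces))

lemma addItems_append (C : Cplx) (l₁ l₂ : List MorseItem) :
    addItems C (l₁ ++ l₂) = addItems (addItems C l₁) l₂ :=
  List.foldl_append

lemma isSimpComplex_empty : IsSimpComplex ∅ := by
  constructor <;> simp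

lemma IsSimpComplex.union_of_not_subset {C A B : Cplx} (hC : IsSimpComplex C)
    (hS : IsSimpComplex (C ∪ A ∪ B)) (hAB : ∀ α ∈ A, ∀ β ∈ B, ¬ α ⊆ β) :
    IsSimpComplex (C ∪ B) := by
  refine ⟨fun τ hτ => hS.1 τ (union_subset_union_left subset_union_left hτ), ?_⟩
  intro τ hτ η hητ hη
  rcases mem_union.1 hτ with hτC | hτB
  · exact mem_union_left _ (hC.2 τ hτC η hητ hη)
  · rcases mem_union.1 (hS.2 τ (mem_union_right _ hτB) η hητ hη) with hCA | hB
    · rcases mem_union.1 hCA with hC' | hA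
      · exact mem_union_left _ hC'
      · exact absurd hητ (hAB η hA τ hτB)
    · exact mem_union_right _ hB

namespace StepOK

variable {F : Simplex → ℤ} {C : Cplx} {it : MorseItem}

lemma isSimpComplex (h : StepOK F C it) : IsSimpComplex (C ∪ it.faces) := by
  cases it with
  | crit ν => simpa [MorseItem.faces, union_comm] using h.2.1
  | pair σ τ => exact h.2.2.1

lemma not_mem (h : StepOK F C it) : ∀ α ∈ it.faces, α ∉ C := by
  cases it with
  | crit ν => simpa [MorseItem.faces] using h.1
  | pair σ τ => simpa [MorseItem.faces] using And.intro h.1 h.2.1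

lemma val_eq (h : StepOK F C it) : ∀ α ∈ it.faces, F α = it.val F := by
  cases it with
  | crit ν => simp [MorseItem.faces, MorseItem.val]
  | pair σ τ => simpa [MorseItem.faces, MorseItem.val] using h.2.2.2.2.symm

lemma of_subset {C' : Cplx} (h : StepOK F C it) (hC' : C' ⊆ C)
    (hS : IsSimpComplex (C' ∪ it.faces)) : StepOK F C' it := by
  cases it with
  | crit ν =>
    obtain ⟨hν, -, hmax⟩ := h
    refine ⟨fun hνC => hν (hC' hνC), by simpa [MorseItem.faces, union_comm] using hS, ?_⟩
    exact fun ρ hρ => hmax ρ (insert_subset_insert ν hC' hρ)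
  | pair σ τ =>
    obtain ⟨hσ, hτ, -, ⟨-, -, hστ, hfree⟩, hF⟩ := h
    refine ⟨fun hσC => hσ (hC' hσC), fun hτC => hτ (hC' hτC), hS, ?_, hF⟩
    refine ⟨mem_union_right _ (by simp), mem_union_right _ (by simp), hστ, ?_⟩
    exact fun ρ hρ => hfree ρ (union_subset_union_left hC' hρ)

lemma union_of_not_subset {B : Cplx} (h : StepOK F C it)
    (hB : ∀ α ∈ it.faces, ∀ β ∈ B, ¬ α ⊆ β) (hS : IsSimpComplex (C ∪ B ∪ it.faces)) :
    StepOK F (C ∪ B) it := by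
  have hnew : ∀ α ∈ it.faces, α ∉ C ∪ B := fun α hα hCB =>
    (mem_union.1 hCB).elim (h.not_mem α hα) (fun hαB => hB α hα α hαB subset_rfl)
  cases it with
  | crit ν =>
    have hν : ν ∈ (MorseItem.crit ν).faces := mem_singleton_self ν
    refine ⟨hnew ν hν, by simpa [MorseItem.faces, union_comm] using hS, ?_⟩
    intro ρ hρ hνρ
    rcases mem_insert.1 hρ with rfl | hρCB
    · rfl
    rcases mem_union.1 hρCB with hρC | hρB
    · exact h.2.2 ρ (mem_insert_of_mem hρC) hνρ
    · exact absurd hνρ (hB ν hν ρ hρB)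
  | pair σ τ =>
    have hσ : σ ∈ (MorseItem.pair σ τ).faces := by simp [MorseItem.faces]
    have hτ : τ ∈ (MorseItem.pair σ τ).faces := by simp [MorseItem.faces]
    obtain ⟨-, -, -, ⟨-, -, hστ, hfree⟩, hF⟩ := h
    refine ⟨hnew σ hσ, hnew τ hτ, hS, ⟨mem_union_right _ hσ, mem_union_right _ hτ, hστ, ?_⟩, hF⟩
    intro ρ hρ hσρ
    rcases mem_union.1 hρ with hρCB | hρ
    · rcases mem_union.1 hρCB with hρC | hρB
      · exact hfree ρ (mem_union_left _ hρC) hσρ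
      · exact absurd hσρ.subset (hB σ hσ ρ hρB)
    · exact hfree ρ (mem_union_right _ hρ) hσρ

end StepOK

lemma SWSeq.of_append {F : Simplex → ℤ} {C : Cplx} {l₁ l₂ : List MorseItem}
    (h : SWSeq F C (l₁ ++ l₂)) : SWSeq F (addItems C l₁) l₂ := by
  induction l₁ generalizing C with
  | nil => exact h
  | cons it l₁ ih => exact ih h.2

lemma SWSeq.swap {F : Simplex → ℤ} {a b : MorseItem}
    (hab : ∀ α ∈ a.faces, ∀ β ∈ b.faces, ¬ α ⊆ β) {C : Cplx} (hC : IsSimpComplex C)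
    {l₁ l₂ : List MorseItem} (h : SWSeq F C (l₁ ++ a :: b :: l₂)) :
    SWSeq F C (l₁ ++ b :: a :: l₂) := by
  induction l₁ generalizing C with
  | cons it l₁ ih => exact ⟨h.1, ih h.1.isSimpComplex h.2⟩
  | nil =>
    obtain ⟨ha, hb, hrest⟩ := h
    have hS := hb.isSimpComplex
    have hCb := hC.union_of_not_subset hS hab
    have hcomm : C ∪ b.faces ∪ a.faces = C ∪ a.faces ∪ b.faces := union_right_comm _ _ _
    exact ⟨hb.of_subset subset_union_left hCb,
      ha.union_of_not_subset hab (hcomm ▸ hS), hcomm ▸ hrest⟩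

theorem exchange_lemma_general (K : Cplx) (F : Simplex → ℤ)
    (l₁ l₂ : List MorseItem) (a b : MorseItem)
    (hF : IsStackOn K F)
    (hseq : SWSeq F ∅ (l₁ ++ a :: b :: l₂))
    (hbuild : List.foldl (fun C it => C ∪ it.faces) ∅ (l₁ ++ a :: b :: l₂) = K)
    (hval : MorseItem.val F b < MorseItem.val F a) :
    SWSeq F ∅ (l₁ ++ b :: a :: l₂) := by
  set C := addItems ∅ l₁
  obtain ⟨ha, hb, -⟩ : SWSeq F C (a :: b :: l₂) := hseq.of_append
  have hK : C ∪ a.faces ∪ b.faces ⊆ K := by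
    rw [← hbuild]
    change _ ⊆ addItems ∅ (l₁ ++ a :: b :: l₂)
    rw [addItems_append]
    exact subset_addItems _ l₂
  refine hseq.swap (fun α hα β hβ hαβ => hval.not_ge ?_) isSimpComplex_empty
  calc b.val F = F β := (hb.val_eq β hβ).symm
    _ ≥ F α := hF α (hK (mem_union_left _ (mem_union_right _ hα)))
        β (hK (mem_union_right _ hβ)) hαβ
    _ = a.val F := ha.val_eq α hα

theorem exchange_lemma (K : Cplx) (F : Simplex → ℤ)
    (l₁ l₂ : List MorseItem) (a b : MorseItem)
    (hK : IsSimpComplex K) (hF : IsStackOn K F)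
    (hseq : SWSeq F ∅ (l₁ ++ a :: b :: l₂))
    (hbuild : List.foldl (fun C it => C ∪ it.faces) ∅ (l₁ ++ a :: b :: l₂) = K)
    (hval : MorseItem.val F b < MorseItem.val F a) :
    SWSeq F ∅ (l₁ ++ b :: a :: l₂) :=
  exchange_lemma_general K F l₁ l₂ a b hF hseq hbuild hval
end

section
/- Let F be a stack on K and W an F-sequence from ∅ to K. Then there exists a flooding sequence on F that is equivalent to W, i.e., has the same gradient vector field (same set of regular pairs). -/
open Finset

/-!
In an `F`-sequence every step adds cells sharing one value of `F`. Sort the steps stably by that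
value. A face of a cell `μ` is added no later than `μ` and has no larger value, so each prefix of
the sorted sequence is a complex. A cell of the sorted prefix that contains a cell added by the
current step has a value at least as large, and at most as large since the steps are sorted; so
it was added by the original sequence no later than that step. Hence free pairs stay free and
facets stay facets. The steps, and so the regular pairs, are unchanged, and the sorting makes
the sequence a flooding.
-/

section Rank

variable {ι α : Type*} [LinearOrder α]

def rankIn (s : Finset ι) (f : ι → α) (a : ι) : ℕ := #{b ∈ s | f b < f a}

variable {s : Finset ι} {f : ι → α} {a b : ι}

lemma rankIn_le_rankIn (h : f a ≤ f b) : rankIn s f a ≤ rankIn s f b :=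
  card_le_card fun c hc => by
    rw [mem_filter] at hc ⊢
    exact ⟨hc.1, hc.2.trans_le h⟩

lemma rankIn_lt_rankIn (ha : a ∈ s) (h : f a < f b) : rankIn s f a < rankIn s f b := by
  refine card_lt_card ((ssubset_iff_of_subset fun c hc => ?_).2 ⟨a, ?_, ?_⟩)
  · rw [mem_filter] at hc ⊢
    exact ⟨hc.1, hc.2.trans h⟩
  · exact mem_filter.2 ⟨ha, h⟩
  · simp

lemma lt_of_rankIn_lt_rankIn (h : rankIn s f a < rankIn s f b) : f a < f b :=
  lt_of_not_ge fun hba => h.not_ge (rankIn_le_rankIn hba)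

lemma rankIn_lt_card (ha : a ∈ s) : rankIn s f a < #s :=
  card_lt_card (filter_ssubset.2 ⟨a, ha, lt_irrefl _⟩)

lemma rankIn_injOn (hf : Set.InjOn f s) : Set.InjOn (rankIn s f) s := by
  intro a ha b hb hab
  by_contra hne
  rcases lt_or_gt_of_ne (hf.ne ha hb hne) with h | h
  · exact (rankIn_lt_rankIn ha h).ne hab
  · exact (rankIn_lt_rankIn hb h).ne' hab

lemma exists_rankIn_eq (hf : Set.InjOn f s) {j : ℕ} (hj : j < #s) :
    ∃ a ∈ s, rankIn s f a = j :=
  surjOn_of_injOn_of_card_le (rankIn s f) (fun _ ha => mem_range.2 (rankIn_lt_card ha))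
    (rankIn_injOn hf) (by simp) (mem_range.2 hj)

end Rank

lemma union_pair_sdiff {α : Type*} [DecidableEq α] {A : Finset α} {a b : α} (ha : a ∉ A)
    (hb : b ∉ A) : (A ∪ {a, b}) \ A = {a, b} :=
  union_sdiff_cancel_left (by simp [ha, hb])

lemma eq_and_eq_of_pair_eq_pair {σ τ σ' τ' : Simplex} (h : ({σ, τ} : Cplx) = {σ', τ'})
    (hστ : σ ⊂ τ) (hστ' : σ' ⊂ τ') : σ = σ' ∧ τ = τ' := by
  have h' := congrArg ((↑) : Cplx → Set Simplex) h
  rw [coe_pair, coe_pair, Set.pair_eq_pair_iff] at h'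
  rcases h' with h' | ⟨rfl, rfl⟩
  · exact h'
  · exact (ssubset_asymm hστ hστ').elim

lemma ElemExpansion.transplant {A A' B B' : Cplx} (h : ElemExpansion A' A) (hB : B ⊆ B')
    (hnew : B' \ B = A' \ A) (hup : ∀ μ ∈ A' \ A, ∀ ρ ∈ B', μ ⊆ ρ → ρ ∈ A') :
    ElemExpansion B' B := by
  obtain ⟨σ, τ, hσA, hτA, rfl, -, -, hστ, hfree⟩ := h
  rw [union_pair_sdiff hσA hτA] at hnew hup
  have hσ : σ ∈ B' \ B := by simp [hnew]
  have hτ : τ ∈ B' \ B := by simp [hnew]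
  refine ⟨σ, τ, (mem_sdiff.1 hσ).2, (mem_sdiff.1 hτ).2, ?_, (mem_sdiff.1 hσ).1,
    (mem_sdiff.1 hτ).1, hστ, fun ρ hρ hσρ => hfree ρ (hup σ (by simp) ρ hρ hσρ.subset) hσρ⟩
  rw [← hnew, union_sdiff_of_subset hB]

lemma ElemFilling.transplant {A A' B B' : Cplx} (h : ElemFilling A' A) (hB : B ⊆ B')
    (hnew : B' \ B = A' \ A) (hup : ∀ μ ∈ A' \ A, ∀ ρ ∈ B', μ ⊆ ρ → ρ ∈ A') :
    ElemFilling B' B := by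
  obtain ⟨ν, hνA, rfl, hfacet⟩ := h
  rw [insert_sdiff_cancel hνA] at hnew hup
  have hν : ν ∈ B' \ B := by simp [hnew]
  refine ⟨ν, (mem_sdiff.1 hν).2, ?_, fun ρ hρ hνρ => hfacet ρ (hup ν (by simp) ρ hρ hνρ) hνρ⟩
  rw [← union_sdiff_of_subset hB, hnew, union_singleton]

section MorseSeq

variable {L K : Cplx} {k : ℕ} {W : ℕ → Cplx}

lemma MorseSeq.subset_succ_s15 (hW : MorseSeq L K k W) {i : ℕ} (hi : i < k) : W i ⊆ W (i + 1) := by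
  rcases hW.2.2.2 i hi with ⟨σ, τ, -, -, h, -⟩ | ⟨ν, -, h, -⟩
  · exact h ▸ subset_union_left
  · exact h ▸ subset_insert ν (W i)

lemma MorseSeq.mono (hW : MorseSeq L K k W) {i j : ℕ} (hij : i ≤ j) (hj : j ≤ k) :
    W i ⊆ W j := by
  induction j, hij using Nat.le_induction with
  | base => exact Subset.rfl
  | succ j _ ih => exact (ih (by omega)).trans (hW.subset_succ_s15 (by omega))

lemma MorseSeq.regularPair_iff (hW : MorseSeq L K k W) {σ τ : Simplex} :
    RegularPair k W σ τ ↔ σ ⊂ τ ∧ ∃ i < k, W (i + 1) \ W i = {σ, τ} := by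
  constructor
  · rintro ⟨i, hi, hσ, hτ, h, hfree⟩
    exact ⟨hfree.2.2.1, i, hi, h ▸ union_pair_sdiff hσ hτ⟩
  · rintro ⟨hστ, i, hi, hnew⟩
    rcases hW.2.2.2 i hi with ⟨σ', τ', hσ', hτ', h, hfree⟩ | ⟨ν, hν, h, -⟩
    · rw [h, union_pair_sdiff hσ' hτ'] at hnew
      obtain ⟨rfl, rfl⟩ := eq_and_eq_of_pair_eq_pair hnew.symm hστ hfree.2.2.1
      exact ⟨i, hi, hσ', hτ', h, hfree⟩
    · rw [h, insert_sdiff_cancel hν] at hnew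
      have hσ : σ ∈ ({ν} : Cplx) := hnew ▸ mem_insert_self σ {τ}
      have hτ : τ ∈ ({ν} : Cplx) := hnew ▸ by simp
      rw [mem_singleton] at hσ hτ
      exact absurd (hσ.trans hτ.symm) hστ.ne

noncomputable def birthStep (W : ℕ → Cplx) (μ : Simplex) : ℕ := sInf {n | μ ∈ W (n + 1)}

lemma birthStep_le {n : ℕ} {μ : Simplex} (h : μ ∈ W (n + 1)) : birthStep W μ ≤ n :=
  Nat.sInf_le h

lemma MorseSeq.mem_birthStep_succ (hW : MorseSeq ∅ K k W) {μ : Simplex} (hμ : μ ∈ K) :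
    μ ∈ W (birthStep W μ + 1) := by
  obtain ⟨k, rfl⟩ : ∃ k', k = k' + 1 :=
    Nat.exists_eq_succ_of_ne_zero fun hk => by simp [← hW.2.1, hk, hW.1] at hμ
  have hμk : μ ∈ W (k + 1) := hW.2.1 ▸ hμ
  exact Nat.sInf_mem (s := {n | μ ∈ W (n + 1)}) ⟨k, hμk⟩

lemma MorseSeq.mem_iff_birthStep_lt (hW : MorseSeq ∅ K k W) {n : ℕ} (hn : n ≤ k)
    {μ : Simplex} : μ ∈ W n ↔ μ ∈ K ∧ birthStep W μ < n := by
  constructor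
  · intro h
    cases n with
    | zero => simp [hW.1] at h
    | succ m => exact ⟨hW.2.1 ▸ hW.mono hn le_rfl h, Nat.lt_succ_of_le (birthStep_le h)⟩
  · rintro ⟨hμ, hlt⟩
    exact hW.mono hlt hn (hW.mem_birthStep_succ hμ)

lemma MorseSeq.birthStep_lt (hW : MorseSeq ∅ K k W) {μ : Simplex} (hμ : μ ∈ K) :
    birthStep W μ < k :=
  ((hW.mem_iff_birthStep_lt le_rfl).1 (hW.2.1 ▸ hμ)).2

lemma MorseSeq.mem_sdiff_iff_birthStep_eq (hW : MorseSeq ∅ K k W) {i : ℕ} (hi : i < k)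
    {μ : Simplex} : μ ∈ W (i + 1) \ W i ↔ μ ∈ K ∧ birthStep W μ = i := by
  rw [mem_sdiff, hW.mem_iff_birthStep_lt hi, hW.mem_iff_birthStep_lt hi.le]
  grind

end MorseSeq

section FSeq

variable {F : Simplex → ℤ} {L K : Cplx} {k : ℕ} {W : ℕ → Cplx}

lemma FSeq.apply_eq_of_mem_sdiff (hW : FSeq F L K k W) {i : ℕ} (hi : i < k) {μ μ' : Simplex}
    (hμ : μ ∈ W (i + 1) \ W i) (hμ' : μ' ∈ W (i + 1) \ W i) : F μ = F μ' := by
  rcases hW.1.2.2.2 i hi with ⟨σ, τ, hσ, hτ, h, hfree⟩ | ⟨ν, hν, h, -⟩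
  · have hFστ := hW.2 σ τ ⟨i, hi, hσ, hτ, h, hfree⟩
    rw [h, union_pair_sdiff hσ hτ, mem_insert, mem_singleton] at hμ hμ'
    rcases hμ with rfl | rfl <;> rcases hμ' with rfl | rfl <;> simp [hFστ]
  · rw [h, insert_sdiff_cancel hν, mem_singleton] at hμ hμ'
    rw [hμ, hμ']

/-- The value of `F` on some cell added at step `i` of `W`; in an `F`-sequence they all share it. -/
noncomputable def stepValue (F : Simplex → ℤ) (W : ℕ → Cplx) (i : ℕ) : ℤ :=
  if h : (W (i + 1) \ W i).Nonempty then F h.choose else 0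

lemma FSeq.stepValue_eq (hW : FSeq F L K k W) {i : ℕ} (hi : i < k) {μ : Simplex}
    (hμ : μ ∈ W (i + 1) \ W i) : stepValue F W i = F μ := by
  have h : (W (i + 1) \ W i).Nonempty := ⟨μ, hμ⟩
  rw [stepValue, dif_pos h]
  exact hW.apply_eq_of_mem_sdiff hi h.choose_spec hμ

noncomputable def stepKey (F : Simplex → ℤ) (W : ℕ → Cplx) (i : ℕ) : ℤ ×ₗ ℕ :=
  toLex (stepValue F W i, i)

lemma stepKey_injective : Function.Injective (stepKey F W) := fun i j h => by
  simpa [stepKey] using congrArg (fun x => (ofLex x).2) h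

lemma FSeq.stepKey_birthStep (hW : FSeq F ∅ K k W) {μ : Simplex} (hμ : μ ∈ K) :
    stepKey F W (birthStep W μ) = toLex (F μ, birthStep W μ) := by
  rw [stepKey, hW.stepValue_eq (hW.1.birthStep_lt hμ)
    ((hW.1.mem_sdiff_iff_birthStep_eq (hW.1.birthStep_lt hμ)).2 ⟨hμ, rfl⟩)]

end FSeq

section Flooding

variable {F : Simplex → ℤ} {K : Cplx} {k : ℕ} {W : ℕ → Cplx}

noncomputable abbrev stepRank (F : Simplex → ℤ) (W : ℕ → Cplx) (k i : ℕ) : ℕ :=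
  rankIn (range k) (stepKey F W) i

/-- `W` with its steps sorted by `stepKey`: the cells added by the `j` first sorted steps. -/
noncomputable def floodSeq (F : Simplex → ℤ) (W : ℕ → Cplx) (k j : ℕ) : Cplx :=
  (W k).filter fun μ => stepRank F W k (birthStep W μ) < j

lemma mem_floodSeq {j : ℕ} {μ : Simplex} :
    μ ∈ floodSeq F W k j ↔ μ ∈ W k ∧ stepRank F W k (birthStep W μ) < j :=
  mem_filter

lemma floodSeq_mono {i j : ℕ} (hij : i ≤ j) : floodSeq F W k i ⊆ floodSeq F W k j :=
  fun _ hμ => mem_floodSeq.2 ⟨(mem_floodSeq.1 hμ).1, (mem_floodSeq.1 hμ).2.trans_le hij⟩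

lemma exists_stepRank_eq {j : ℕ} (hj : j < k) :
    ∃ a < k, stepRank F W k a = j := by
  obtain ⟨a, ha, h⟩ := exists_rankIn_eq (s := range k) (stepKey_injective (F := F) (W := W)).injOn
    (by rwa [card_range])
  exact ⟨a, mem_range.1 ha, h⟩

lemma stepRank_lt {a : ℕ} (ha : a < k) : stepRank F W k a < k :=
  (rankIn_lt_card (mem_range.2 ha)).trans_eq (card_range k)

lemma FSeq.floodSeq_succ_sdiff (hW : FSeq F ∅ K k W) {a : ℕ} (ha : a < k) :
    floodSeq F W k (stepRank F W k a + 1) \ floodSeq F W k (stepRank F W k a) =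
      W (a + 1) \ W a := by
  ext μ
  rw [mem_sdiff, mem_floodSeq, mem_floodSeq, hW.1.mem_sdiff_iff_birthStep_eq ha, hW.1.2.1]
  constructor
  · rintro ⟨⟨hμ, hle⟩, hnlt⟩
    refine ⟨hμ, rankIn_injOn (stepKey_injective (F := F) (W := W)).injOn ?_ (mem_range.2 ha) ?_⟩
    · exact mem_range.2 (hW.1.birthStep_lt hμ)
    · exact le_antisymm (Nat.lt_succ_iff.1 hle) (not_lt.1 fun h => hnlt ⟨hμ, h⟩)
  · rintro ⟨hμ, rfl⟩
    exact ⟨⟨hμ, Nat.lt_succ_self _⟩, fun h => lt_irrefl _ h.2⟩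

lemma FSeq.mem_of_subset_of_mem_floodSeq (hF : IsStackOn K F) (hW : FSeq F ∅ K k W) {a : ℕ}
    (ha : a < k) {μ ρ : Simplex} (hμ : μ ∈ W (a + 1) \ W a)
    (hρ : ρ ∈ floodSeq F W k (stepRank F W k a + 1)) (hμρ : μ ⊆ ρ) : ρ ∈ W (a + 1) := by
  rw [mem_floodSeq, hW.1.2.1] at hρ
  obtain ⟨hρK, hle⟩ := hρ
  obtain ⟨hμK, rfl⟩ := (hW.1.mem_sdiff_iff_birthStep_eq ha).1 hμ
  have hkey : stepKey F W (birthStep W ρ) ≤ stepKey F W (birthStep W μ) :=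
    le_of_not_gt fun h => (rankIn_lt_rankIn (mem_range.2 ha) h).not_ge (Nat.lt_succ_iff.1 hle)
  rw [hW.stepKey_birthStep hρK, hW.stepKey_birthStep hμK, Prod.Lex.toLex_le_toLex] at hkey
  have hFμρ := hF μ hμK ρ hρK hμρ
  have hbirth : birthStep W ρ ≤ birthStep W μ := by dsimp only at hkey; omega
  exact hW.1.mono (Nat.succ_le_succ hbirth) ha (hW.1.mem_birthStep_succ hρK)

lemma FSeq.isSimpComplex_floodSeq (hF : IsStackOn K F) (hW : FSeq F ∅ K k W) (j : ℕ) :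
    IsSimpComplex (floodSeq F W k j) := by
  have hK : IsSimpComplex K := hW.1.2.1 ▸ hW.1.2.2.1 k le_rfl
  refine ⟨fun τ hτ => hK.1 τ (hW.1.2.1 ▸ (mem_floodSeq.1 hτ).1), fun τ hτ σ hστ hσ => ?_⟩
  rw [mem_floodSeq, hW.1.2.1] at hτ ⊢
  obtain ⟨hτK, hlt⟩ := hτ
  have hσW : σ ∈ W (birthStep W τ + 1) :=
    (hW.1.2.2.1 _ (hW.1.birthStep_lt hτK)).2 τ (hW.1.mem_birthStep_succ hτK) σ hστ hσ
  have hσK : σ ∈ K := hW.1.2.1 ▸ hW.1.mono (hW.1.birthStep_lt hτK) le_rfl hσW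
  have hkey : stepKey F W (birthStep W σ) ≤ stepKey F W (birthStep W τ) := by
    rw [hW.stepKey_birthStep hσK, hW.stepKey_birthStep hτK, Prod.Lex.toLex_le_toLex]
    have := hF σ hσK τ hτK hστ
    have := birthStep_le hσW
    dsimp only
    omega
  exact ⟨hσK, (rankIn_le_rankIn hkey).trans_lt hlt⟩

lemma FSeq.floodSeq_step (hF : IsStackOn K F) (hW : FSeq F ∅ K k W) {j : ℕ} (hj : j < k) :
    ElemExpansion (floodSeq F W k (j + 1)) (floodSeq F W k j) ∨
      ElemFilling (floodSeq F W k (j + 1)) (floodSeq F W k j) := by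
  obtain ⟨a, ha, rfl⟩ := exists_stepRank_eq (F := F) (W := W) hj
  have hsub := floodSeq_mono (F := F) (W := W) (k := k) (Nat.le_succ (stepRank F W k a))
  have hup : ∀ μ ∈ W (a + 1) \ W a, ∀ ρ ∈ floodSeq F W k (stepRank F W k a + 1), μ ⊆ ρ →
      ρ ∈ W (a + 1) :=
    fun _ hμ _ hρ hμρ => hW.mem_of_subset_of_mem_floodSeq hF ha hμ hρ hμρ
  rcases hW.1.2.2.2 a ha with h | h
  · exact Or.inl (h.transplant hsub (hW.floodSeq_succ_sdiff ha) hup)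
  · exact Or.inr (h.transplant hsub (hW.floodSeq_succ_sdiff ha) hup)

lemma FSeq.morseSeq_floodSeq (hF : IsStackOn K F) (hW : FSeq F ∅ K k W) :
    MorseSeq ∅ K k (floodSeq F W k) := by
  refine ⟨?_, ?_, fun j _ => hW.isSimpComplex_floodSeq hF j, fun j hj => hW.floodSeq_step hF hj⟩
  · ext μ
    simp [mem_floodSeq]
  · ext μ
    rw [mem_floodSeq, hW.1.2.1]
    exact ⟨And.left, fun hμ => ⟨hμ, stepRank_lt (hW.1.birthStep_lt hμ)⟩⟩

lemma FSeq.exists_sdiff_floodSeq_iff (hW : FSeq F ∅ K k W) {D : Cplx} :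
    (∃ i < k, W (i + 1) \ W i = D) ↔
      ∃ j < k, floodSeq F W k (j + 1) \ floodSeq F W k j = D := by
  constructor
  · rintro ⟨i, hi, h⟩
    exact ⟨stepRank F W k i, stepRank_lt hi, (hW.floodSeq_succ_sdiff hi).trans h⟩
  · rintro ⟨j, hj, h⟩
    obtain ⟨a, ha, rfl⟩ := exists_stepRank_eq (F := F) (W := W) hj
    exact ⟨a, ha, (hW.floodSeq_succ_sdiff ha).symm.trans h⟩

lemma FSeq.regularPair_floodSeq_iff (hF : IsStackOn K F) (hW : FSeq F ∅ K k W)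
    {σ τ : Simplex} : RegularPair k (floodSeq F W k) σ τ ↔ RegularPair k W σ τ := by
  rw [hW.1.regularPair_iff, (hW.morseSeq_floodSeq hF).regularPair_iff,
    hW.exists_sdiff_floodSeq_iff]

lemma FSeq.apply_le_of_mem_floodSeq (hW : FSeq F ∅ K k W) {i : ℕ} {σ τ : Simplex}
    (hσ : σ ∈ floodSeq F W k i) (hτ : τ ∈ K) (hτi : τ ∉ floodSeq F W k i) : F σ ≤ F τ := by
  rw [mem_floodSeq, hW.1.2.1] at hσ hτi
  have hkey := lt_of_rankIn_lt_rankIn (hσ.2.trans_le (not_lt.1 fun h => hτi ⟨hτ, h⟩))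
  rw [hW.stepKey_birthStep hσ.1, hW.stepKey_birthStep hτ, Prod.Lex.toLex_lt_toLex] at hkey
  dsimp only at hkey
  omega

lemma FSeq.flooding_floodSeq (hF : IsStackOn K F) (hW : FSeq F ∅ K k W) :
    Flooding F K k (floodSeq F W k) :=
  ⟨⟨hW.morseSeq_floodSeq hF, fun σ τ h => hW.2 σ τ ((hW.regularPair_floodSeq_iff hF).1 h)⟩,
    fun _ _ _ _ _ hσ _ hτ hτi =>
      hW.apply_le_of_mem_floodSeq hσ (hW.1.2.1 ▸ (mem_floodSeq.1 hτ).1) hτi⟩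

end Flooding

theorem exists_equivalent_flooding_sequence_general (K : Cplx) (F : Simplex → ℤ)
    (k : ℕ) (W : ℕ → Cplx)
    (hF : IsStackOn K F) (hW : FSeq F ∅ K k W) :
    ∃ (k' : ℕ) (W' : ℕ → Cplx), Flooding F K k' W' ∧
      ∀ σ τ : Simplex, (RegularPair k W σ τ ↔ RegularPair k' W' σ τ) :=
  ⟨k, floodSeq F W k, hW.flooding_floodSeq hF, fun _ _ => (hW.regularPair_floodSeq_iff hF).symm⟩

theorem exists_equivalent_flooding_sequence (K : Cplx) (F : Simplex → ℤ)
    (k : ℕ) (W : ℕ → Cplx)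
    (hK : IsSimpComplex K) (hF : IsStackOn K F) (hW : FSeq F ∅ K k W) :
    ∃ (k' : ℕ) (W' : ℕ → Cplx), Flooding F K k' W' ∧
      ∀ σ τ : Simplex, (RegularPair k W σ τ ↔ RegularPair k' W' σ τ) :=
  exists_equivalent_flooding_sequence_general K F k W hF hW
end

section
/- Any contraction of a cosimplicial complex is a cosimplicial complex: if S is a cosimplicial complex and S' is obtained from S by a reduction, perforation, coreduction, or coperforation, then S' is a cosimplicial complex. -/
open Finset

/-! Removing from an order-convex family all sets above (or all sets below) a fixed set keeps it
convex, since the complement of an upper (lower) set is a lower (upper) set. Each contraction is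
such a removal: if `δ(σ, S) = {τ}`, then every `b ∈ S` containing `σ` is `σ` or `τ`, because
each `x ∈ b \ σ` gives `insert x σ ∈ δ(σ, S)`; the other three cases are analogous. -/

theorem isCosimplicial_iff_ordConnected {S : Cplx} :
    IsCosimplicial S ↔ (S : Set Simplex).OrdConnected := by
  simp only [IsCosimplicial, Set.ordConnected_def, Set.subset_def, Set.mem_Icc, and_imp,
    Finset.mem_coe]

namespace IsCosimplicial

variable {S : Cplx}

theorem filter (hS : IsCosimplicial S) {p : Simplex → Prop} [DecidablePred p]
    (hp : {x | p x}.OrdConnected) : IsCosimplicial (S.filter p) := by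
  rw [isCosimplicial_iff_ordConnected, Finset.coe_filter]
  exact (isCosimplicial_iff_ordConnected.mp hS).inter hp

theorem sdiff_filter_superset (hS : IsCosimplicial S) (σ : Simplex) :
    IsCosimplicial (S \ S.filter (σ ⊆ ·)) := by
  rw [← Finset.filter_not]
  exact hS.filter (isUpperSet_Ici σ).compl.ordConnected

theorem sdiff_filter_subset (hS : IsCosimplicial S) (τ : Simplex) :
    IsCosimplicial (S \ S.filter (· ⊆ τ)) := by
  rw [← Finset.filter_not]
  exact hS.filter (isLowerSet_Iic τ).compl.ordConnected

theorem insert_mem_cob (hS : IsCosimplicial S) {σ b : Simplex} (hσ : σ ∈ S) (hb : b ∈ S)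
    (hσb : σ ⊆ b) {x : ℕ} (hxb : x ∈ b) (hxσ : x ∉ σ) : insert x σ ∈ cob S σ := by
  have hmem : insert x σ ∈ S :=
    hS σ hσ b hb _ (Finset.subset_insert x σ) (Finset.insert_subset hxb hσb)
  simp [cob, hmem, Finset.card_insert_of_notMem hxσ]

theorem erase_mem_bdry (hS : IsCosimplicial S) {a τ : Simplex} (ha : a ∈ S) (hτ : τ ∈ S)
    (haτ : a ⊆ τ) {x : ℕ} (hxτ : x ∈ τ) (hxa : x ∉ a) : τ.erase x ∈ bdry S τ := by
  have hmem : τ.erase x ∈ S :=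
    hS a ha τ hτ _ (Finset.subset_erase.mpr ⟨haτ, hxa⟩) (Finset.erase_subset x τ)
  simp [bdry, hmem, Finset.erase_subset, Finset.card_erase_add_one hxτ]

theorem eq_of_superset_of_cob_eq_singleton (hS : IsCosimplicial S) {σ τ b : Simplex}
    (hσ : σ ∈ S) (hcob : cob S σ = {τ}) (hb : b ∈ S) (hσb : σ ⊆ b) (hbσ : b ≠ σ) :
    b = τ := by
  have hinsert : ∀ x ∈ b, x ∉ σ → insert x σ = τ := fun x hxb hxσ => by
    simpa [hcob] using hS.insert_mem_cob hσ hb hσb hxb hxσ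
  obtain ⟨x, hxb, hxσ⟩ := Finset.exists_of_ssubset (hσb.ssubset_of_ne hbσ.symm)
  refine Finset.Subset.antisymm (fun y hyb => ?_)
    (hinsert x hxb hxσ ▸ Finset.insert_subset hxb hσb)
  by_cases hyσ : y ∈ σ
  · exact hinsert x hxb hxσ ▸ Finset.mem_insert_of_mem hyσ
  · exact hinsert y hyb hyσ ▸ Finset.mem_insert_self y σ

theorem eq_of_subset_of_bdry_eq_singleton (hS : IsCosimplicial S) {σ τ a : Simplex}
    (hτ : τ ∈ S) (hbdry : bdry S τ = {σ}) (ha : a ∈ S) (haτ : a ⊆ τ) (haτ' : a ≠ τ) :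
    a = σ := by
  have herase : ∀ x ∈ τ, x ∉ a → τ.erase x = σ := fun x hxτ hxa => by
    simpa [hbdry] using hS.erase_mem_bdry ha hτ haτ hxτ hxa
  obtain ⟨x, hxτ, hxa⟩ := Finset.exists_of_ssubset (haτ.ssubset_of_ne haτ')
  refine Finset.Subset.antisymm
    (herase x hxτ hxa ▸ Finset.subset_erase.mpr ⟨haτ, hxa⟩) (fun y hyσ => ?_)
  by_contra hya
  have hyτ : y ∈ τ := Finset.mem_of_mem_erase (herase x hxτ hxa ▸ hyσ)
  exact Finset.notMem_erase y τ (herase y hyτ hya ▸ hyσ)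

theorem filter_superset_eq_pair (hS : IsCosimplicial S) {σ τ : Simplex} (hσ : σ ∈ S)
    (hcob : cob S σ = {τ}) : S.filter (σ ⊆ ·) = {σ, τ} := by
  have hτ : τ ∈ cob S σ := hcob ▸ Finset.mem_singleton_self τ
  simp only [cob, Finset.mem_filter] at hτ
  ext b
  simp only [Finset.mem_filter, Finset.mem_insert, Finset.mem_singleton]
  constructor
  · rintro ⟨hb, hσb⟩
    exact or_iff_not_imp_left.mpr (hS.eq_of_superset_of_cob_eq_singleton hσ hcob hb hσb)
  · rintro (rfl | rfl)
    exacts [⟨hσ, subset_rfl⟩, ⟨hτ.1, hτ.2.1⟩]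

theorem filter_subset_eq_pair (hS : IsCosimplicial S) {σ τ : Simplex} (hτ : τ ∈ S)
    (hbdry : bdry S τ = {σ}) : S.filter (· ⊆ τ) = {σ, τ} := by
  have hσ : σ ∈ bdry S τ := hbdry ▸ Finset.mem_singleton_self σ
  simp only [bdry, Finset.mem_filter] at hσ
  ext a
  simp only [Finset.mem_filter, Finset.mem_insert, Finset.mem_singleton]
  constructor
  · rintro ⟨ha, haτ⟩
    exact or_iff_not_imp_right.mpr (hS.eq_of_subset_of_bdry_eq_singleton hτ hbdry ha haτ)
  · rintro (rfl | rfl)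
    exacts [⟨hσ.1, hσ.2.1⟩, ⟨hτ, subset_rfl⟩]

theorem filter_superset_eq_singleton (hS : IsCosimplicial S) {ν : Simplex} (hν : ν ∈ S)
    (hcob : cob S ν = ∅) : S.filter (ν ⊆ ·) = {ν} := by
  ext b
  simp only [Finset.mem_filter, Finset.mem_singleton]
  constructor
  · rintro ⟨hb, hνb⟩
    by_contra hbν
    obtain ⟨x, hxb, hxν⟩ := Finset.exists_of_ssubset (hνb.ssubset_of_ne (Ne.symm hbν))
    simpa [hcob] using hS.insert_mem_cob hν hb hνb hxb hxν
  · rintro rfl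
    exact ⟨hν, subset_rfl⟩

theorem filter_subset_eq_singleton (hS : IsCosimplicial S) {ν : Simplex} (hν : ν ∈ S)
    (hbdry : bdry S ν = ∅) : S.filter (· ⊆ ν) = {ν} := by
  ext a
  simp only [Finset.mem_filter, Finset.mem_singleton]
  constructor
  · rintro ⟨ha, haν⟩
    by_contra haν'
    obtain ⟨x, hxν, hxa⟩ := Finset.exists_of_ssubset (haν.ssubset_of_ne haν')
    simpa [hbdry] using hS.erase_mem_bdry ha hν haν hxν hxa
  · rintro rfl
    exact ⟨hν, subset_rfl⟩

end IsCosimplicial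

theorem contraction_is_cosimplicial (S S' : Cplx) (hcos : IsCosimplicial S)
    (h : (∃ σ τ : Simplex, σ ∈ S ∧ τ ∈ S ∧
            (cob S σ = {τ} ∨ bdry S τ = {σ}) ∧ S' = S \ {σ, τ}) ∨
         (∃ ν ∈ S, (cob S ν = ∅ ∨ bdry S ν = ∅) ∧ S' = S.erase ν)) :
    IsCosimplicial S' := by
  rcases h with ⟨σ, τ, hσ, hτ, hcob | hbdry, rfl⟩ | ⟨ν, hν, hcob | hbdry, rfl⟩
  · rw [← hcos.filter_superset_eq_pair hσ hcob]
    exact hcos.sdiff_filter_superset σ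
  · rw [← hcos.filter_subset_eq_pair hτ hbdry]
    exact hcos.sdiff_filter_subset τ
  · rw [← Finset.sdiff_singleton_eq_erase, ← hcos.filter_superset_eq_singleton hν hcob]
    exact hcos.sdiff_filter_superset ν
  · rw [← Finset.sdiff_singleton_eq_erase, ← hcos.filter_subset_eq_singleton hν hbdry]
    exact hcos.sdiff_filter_subset ν
end
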